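/- Let ρ be a coherent risk measure on L^Φ satisfying the Fenchel–Moreau representation, and set 𝒬 = {Y ∈ L^Ψ : ρ*(−Y) = 0}. Then every Y ∈ 𝒬 satisfies E[Y] = 1, Y ≥ 0 a.s., and ρ(X) = sup_{Y∈𝒬} E[−XY] for all X ∈ L^Φ. -/

import Mathlib

open MeasureTheory Filter Set

noncomputable section

/-- An Orlicz function: convex, increasing, vanishing at 0. -/
structure OrliczFunction where
  toFun : ℝ → ℝ
  convexOn : ConvexOn ℝ (Set.Ici (0:ℝ)) toFun
  monoOn : MonotoneOn toFun (Set.Ici (0:ℝ))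
  map_zero : toFun 0 = 0

namespace Orlicz

variable {Ω : Type*} [MeasurableSpace Ω]

/-- Membership in the Orlicz space `L^Φ`. -/
def MemLp (Φ : OrliczFunction) (μ : Measure Ω) (X : Ω → ℝ) : Prop :=
  AEStronglyMeasurable X μ ∧
    ∃ c : ℝ, 0 < c ∧ Integrable (fun ω => Φ.toFun (|X ω| / c)) μ

/-- Membership in the Orlicz heart `H^Φ`. -/
def MemHeart (Φ : OrliczFunction) (μ : Measure Ω) (X : Ω → ℝ) : Prop :=
  AEStronglyMeasurable X μ ∧
    ∀ c : ℝ, 0 < c → Integrable (fun ω => Φ.toFun (|X ω| / c)) μ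

/-- The Luxemburg norm. -/
def luxNorm (Φ : OrliczFunction) (μ : Measure Ω) (X : Ω → ℝ) : ℝ :=
  sInf {c : ℝ | 0 < c ∧ Integrable (fun ω => Φ.toFun (|X ω| / c)) μ ∧
    ∫ ω, Φ.toFun (|X ω| / c) ∂μ ≤ 1}

/-- The dual pairing `E[XY]`. -/
def pairing (μ : Measure Ω) (X Y : Ω → ℝ) : ℝ := ∫ ω, X ω * Y ω ∂μ

/-- Order convergence in `L^Φ`: a.s. convergence together with order boundedness. -/
def OrderConvTo (Φ : OrliczFunction) (μ : Measure Ω) (X : ℕ → Ω → ℝ) (L : Ω → ℝ) : Prop :=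
  (∀ᵐ ω ∂μ, Tendsto (fun n => X n ω) atTop (nhds (L ω))) ∧
    ∃ Z : Ω → ℝ, MemLp Φ μ Z ∧ ∀ n, ∀ᵐ ω ∂μ, |X n ω| ≤ Z ω

/-- A set is order closed if it contains the order limits of its order convergent sequences. -/
def OrderClosed (Φ : OrliczFunction) (μ : Measure Ω) (C : Set (Ω → ℝ)) : Prop :=
  ∀ (X : ℕ → Ω → ℝ) (L : Ω → ℝ), (∀ n, X n ∈ C) → MemLp Φ μ L →
    OrderConvTo Φ μ X L → L ∈ C

/-- The order closure of a set in `L^Φ`. -/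
def orderClosure (Φ : OrliczFunction) (μ : Measure Ω) (C : Set (Ω → ℝ)) : Set (Ω → ℝ) :=
  {L | MemLp Φ μ L ∧ ∃ X : ℕ → Ω → ℝ, (∀ n, X n ∈ C) ∧ OrderConvTo Φ μ X L}

/-- Closure in the weak topology induced by pairing against functions satisfying `dual`,
within the space of functions satisfying `mem`. -/
def wClosure (mem dual : (Ω → ℝ) → Prop) (μ : Measure Ω) (C : Set (Ω → ℝ)) :
    Set (Ω → ℝ) :=
  {X | mem X ∧ ∀ ε : ℝ, 0 < ε → ∀ F : Finset (Ω → ℝ), (∀ Y ∈ F, dual Y) →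
    ∃ Z ∈ C, ∀ Y ∈ F, |pairing μ Z Y - pairing μ X Y| < ε}

/-- Weak closedness. -/
def WClosed (mem dual : (Ω → ℝ) → Prop) (μ : Measure Ω) (C : Set (Ω → ℝ)) : Prop :=
  wClosure mem dual μ C ⊆ C

/-- Weak sequential closedness. -/
def WSeqClosed (mem dual : (Ω → ℝ) → Prop) (μ : Measure Ω) (C : Set (Ω → ℝ)) : Prop :=
  ∀ (X : ℕ → Ω → ℝ) (L : Ω → ℝ), (∀ n, X n ∈ C) → mem L →
    (∀ Y, dual Y → Tendsto (fun n => pairing μ (X n) Y) atTop (nhds (pairing μ L Y))) →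
    L ∈ C

/-- The Δ₂-condition: `Φ(2t) < k·Φ(t)` for all large `t`. -/
def Delta2 (Φ : OrliczFunction) : Prop :=
  ∃ t₀ : ℝ, 0 < t₀ ∧ ∃ k : ℝ, ∀ t : ℝ, t₀ ≤ t → Φ.toFun (2 * t) < k * Φ.toFun t

/-- `(Φ,Ψ)` is a conjugate pair of Orlicz functions, with `Φ` superlinear and positive. -/
def IsConjugate (Φ Ψ : OrliczFunction) : Prop :=
  (∀ s : ℝ, 0 ≤ s →
      Ψ.toFun s = sSup ((fun t => t * s - Φ.toFun t) '' Set.Ici (0:ℝ))) ∧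
    Tendsto (fun t => Φ.toFun t / t) atTop atTop ∧ (∀ t : ℝ, 0 < t → 0 < Φ.toFun t)

/-- Fenchel conjugate of a functional on `L^Φ`. -/
def rhoStar (Φ : OrliczFunction) (μ : Measure Ω) (ρ : (Ω → ℝ) → EReal) (Y : Ω → ℝ) :
    EReal :=
  sSup {v : EReal | ∃ X : Ω → ℝ, MemLp Φ μ X ∧ v = ((pairing μ X Y : ℝ) : EReal) - ρ X}

/-- A coherent risk measure on `L^Φ`: proper, subadditive, monotone, cash additive and
positively homogeneous. -/
def Coherent (Φ : OrliczFunction) (μ : Measure Ω) (ρ : (Ω → ℝ) → EReal) : Prop :=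
  (∀ X, ρ X ≠ ⊥) ∧
    (∃ X, MemLp Φ μ X ∧ ρ X ≠ ⊤) ∧
    (∀ X Y, MemLp Φ μ X → MemLp Φ μ Y → ρ (X + Y) ≤ ρ X + ρ Y) ∧
    (∀ X Y, MemLp Φ μ X → MemLp Φ μ Y → (∀ᵐ ω ∂μ, Y ω ≤ X ω) → ρ X ≤ ρ Y) ∧
    (∀ (X : Ω → ℝ) (m : ℝ), MemLp Φ μ X →
      ρ (fun ω => X ω + m) = ρ X - ((m : ℝ) : EReal)) ∧
    (∀ (X : Ω → ℝ) (l : ℝ), 0 < l → MemLp Φ μ X → ρ (l • X) = ((l : ℝ) : EReal) * ρ X)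

/-- The Fatou property on `L^Φ`. -/
def Fatou (Φ : OrliczFunction) (μ : Measure Ω) (ρ : (Ω → ℝ) → EReal) : Prop :=
  ∀ (X : ℕ → Ω → ℝ) (L : Ω → ℝ), (∀ n, MemLp Φ μ (X n)) → MemLp Φ μ L →
    OrderConvTo Φ μ X L → ρ L ≤ liminf (fun n => ρ (X n)) atTop

/-- Boundedly a.s. closed subsets of the Orlicz heart. -/
def BddAEClosed (Φ : OrliczFunction) (μ : Measure Ω) (C : Set (Ω → ℝ)) : Prop :=
  ∀ (S : ℕ → Ω → ℝ) (L : Ω → ℝ), (∀ n, S n ∈ C) →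
    (∃ M : ℝ, ∀ n, luxNorm Φ μ (S n) ≤ M) → MemHeart Φ μ L →
    (∀ᵐ ω ∂μ, Tendsto (fun n => S n ω) atTop (nhds (L ω))) → L ∈ C

end Orlicz

open Orlicz

/-!
Positive homogeneity makes `ρ*` take only the values `0` and `⊤`, so the Fenchel–Moreau
representation is a supremum of the linear functionals `X ↦ E[-XY]` over `Y ∈ 𝒬`. For `Y ∈ 𝒬`
this functional is dominated by `ρ`. Fix `X₀` with `ρ X₀` finite. Cash additivity at `X₀ + m`
bounds the affine function `m ↦ E[-X₀Y] - m E[Y]` by `ρ X₀ - m`, which forces `E[Y] = 1`;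
monotonicity at `X₀ + m 1_A` gives `E[-X₀Y] - m ∫_A Y ≤ ρ X₀` for all `m > 0`, hence
`∫_A Y ≥ 0` for every measurable `A`.
-/

open scoped Topology

namespace OrliczFunction

variable {Ω : Type*} [MeasurableSpace Ω] {μ : Measure Ω} (Φ : OrliczFunction)

lemma nonneg {t : ℝ} (ht : 0 ≤ t) : 0 ≤ Φ.toFun t :=
  Φ.map_zero ▸ Φ.monoOn (by simp) ht ht

lemma apply_le_add_div_two {s t u : ℝ} (hs : 0 ≤ s) (hst : s ≤ (t + u) / 2) (ht : 0 ≤ t)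
    (hu : 0 ≤ u) : Φ.toFun s ≤ (Φ.toFun t + Φ.toFun u) / 2 := by
  have hmid := Φ.convexOn.2 (mem_Ici.mpr ht) (mem_Ici.mpr hu)
    (by norm_num : (0:ℝ) ≤ 1/2) (by norm_num : (0:ℝ) ≤ 1/2) (by norm_num)
  simp only [smul_eq_mul] at hmid
  calc Φ.toFun s ≤ Φ.toFun ((1/2 : ℝ) * t + (1/2 : ℝ) * u) :=
        Φ.monoOn (mem_Ici.mpr hs) (mem_Ici.mpr (by positivity)) (by linarith)
    _ ≤ (Φ.toFun t + Φ.toFun u) / 2 := by linarith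

lemma aestronglyMeasurable_comp {f : Ω → ℝ} (hf : AEMeasurable f μ) (hf0 : ∀ ω, 0 ≤ f ω) :
    AEStronglyMeasurable (fun ω => Φ.toFun (f ω)) μ := by
  have hmono : Monotone (fun t : ℝ => Φ.toFun (max t 0)) := fun s t hst =>
    Φ.monoOn (le_max_right s 0) (le_max_right t 0) (max_le_max hst le_rfl)
  have hcomp := (hmono.measurable.comp_aemeasurable hf).aestronglyMeasurable
  simpa only [Function.comp_def, max_eq_left (hf0 _)] using hcomp

end OrliczFunction

namespace Orlicz

variable {Ω : Type*} [MeasurableSpace Ω] {μ : Measure Ω} {Φ : OrliczFunction}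

lemma MemLp.neg {X : Ω → ℝ} (hX : MemLp Φ μ X) : MemLp Φ μ (-X) := by
  obtain ⟨hm, c, hc, hi⟩ := hX
  exact ⟨hm.neg, c, hc, by simpa only [Pi.neg_apply, abs_neg] using hi⟩

lemma MemLp.const_smul {X : Ω → ℝ} (hX : MemLp Φ μ X) {l : ℝ} (hl : l ≠ 0) :
    MemLp Φ μ (l • X) := by
  obtain ⟨hm, c, hc, hi⟩ := hX
  refine ⟨hm.const_smul l, |l| * c, by positivity, ?_⟩
  simpa only [Pi.smul_apply, smul_eq_mul, abs_mul,
    mul_div_mul_left _ _ (abs_ne_zero.mpr hl)] using hi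

lemma MemLp.add_of_abs_le [IsFiniteMeasure μ] {X W : Ω → ℝ} (hX : MemLp Φ μ X)
    (hW : AEStronglyMeasurable W μ) {C : ℝ} (hC : ∀ ω, |W ω| ≤ C) : MemLp Φ μ (X + W) := by
  obtain ⟨hm, c, hc, hi⟩ := hX
  refine ⟨hm.add hW, 2 * c, by positivity, ?_⟩
  have hbound : ∀ ω, Φ.toFun (|(X + W) ω| / (2 * c))
      ≤ (Φ.toFun (|X ω| / c) + Φ.toFun (|C| / c)) / 2 := fun ω => by
    refine Φ.apply_le_add_div_two (by positivity) ?_ (by positivity) (by positivity)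
    rw [← add_div, div_div, mul_comm c 2]
    gcongr
    exact (abs_add_le _ _).trans (by linarith [hC ω, le_abs_self C])
  have hdom : Integrable (fun ω => (Φ.toFun (|X ω| / c) + Φ.toFun (|C| / c)) / 2) μ :=
    (hi.add (integrable_const _)).div_const 2
  refine hdom.mono
    (Φ.aestronglyMeasurable_comp ((hm.add hW).norm.aemeasurable.div_const _)
      fun ω => by positivity) (Eventually.of_forall fun ω => ?_)
  rw [Real.norm_eq_abs, Real.norm_eq_abs, abs_of_nonneg (Φ.nonneg (by positivity))]
  exact (hbound ω).trans (le_abs_self _)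

end Orlicz

section IntegralBounds

variable {Ω : Type*} [MeasurableSpace Ω] {μ : Measure Ω} {X Z : Ω → ℝ} {r : ℝ}

lemma integrable_of_forall_integral_add_const_mul_le
    (h : ∀ m : ℝ, ∫ ω, (X ω + m) * Z ω ∂μ ≤ r - m) :
    Integrable Z μ ∧ Integrable (fun ω => X ω * Z ω) μ := by
  -- a non-integrable integrand has integral `0`, which violates the bound as soon as `m > r`
  have hint : ∀ m, r < m → Integrable (fun ω => (X ω + m) * Z ω) μ := fun m hm => by
    by_contra hni
    have hm' := h m
    rw [integral_undef hni] at hm'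
    linarith
  have hZ : Integrable Z μ :=
    ((hint (r + 2) (by linarith)).sub (hint (r + 1) (by linarith))).congr
      (Eventually.of_forall fun ω => by simp only [Pi.sub_apply]; ring)
  refine ⟨hZ, ((hint (r + 1) (by linarith)).sub (hZ.const_mul (r + 1))).congr
    (Eventually.of_forall fun ω => by simp only [Pi.sub_apply]; ring)⟩

lemma integral_eq_neg_one_of_forall_integral_add_const_mul_le
    (h : ∀ m : ℝ, ∫ ω, (X ω + m) * Z ω ∂μ ≤ r - m) : ∫ ω, Z ω ∂μ = -1 := by
  obtain ⟨hZ, hXZ⟩ := integrable_of_forall_integral_add_const_mul_le h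
  set a := ∫ ω, X ω * Z ω ∂μ
  set b := ∫ ω, Z ω ∂μ
  have hlin : ∀ m : ℝ, m * (b + 1) ≤ r - a := fun m => by
    have hm := h m
    rw [show (fun ω => (X ω + m) * Z ω) = fun ω => X ω * Z ω + m * Z ω by ext; ring,
      integral_add hXZ (hZ.const_mul m), integral_const_mul] at hm
    linarith [mul_add_one m b]
  by_contra hb
  have hm := hlin ((r - a + 1) / (b + 1))
  rw [div_mul_cancel₀ _ fun h' => hb (by linarith)] at hm
  linarith

lemma ae_nonpos_of_forall_integral_add_indicator_mul_le (hZ : Integrable Z μ)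
    (hXZ : Integrable (fun ω => X ω * Z ω) μ)
    (h : ∀ s, MeasurableSet s → ∀ m : ℝ, 0 < m →
      ∫ ω, (X ω + s.indicator (fun _ => m) ω) * Z ω ∂μ ≤ r) :
    ∀ᵐ ω ∂μ, Z ω ≤ 0 := by
  have hset : ∀ s, MeasurableSet s → ∫ ω in s, Z ω ∂μ ≤ 0 := by
    intro s hs
    have hsplit : ∀ m : ℝ, ∫ ω, (X ω + s.indicator (fun _ => m) ω) * Z ω ∂μ
        = ∫ ω, X ω * Z ω ∂μ + m * ∫ ω in s, Z ω ∂μ := fun m => by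
      rw [← integral_indicator hs, ← integral_const_mul, ← integral_add hXZ
        ((hZ.indicator hs).const_mul m)]
      congr 1 with ω
      by_cases hω : ω ∈ s <;> simp [hω, add_mul]
    by_contra! hpos
    have hm := h s hs _ (by positivity : 0 < (|r - ∫ ω, X ω * Z ω ∂μ| + 1) / ∫ ω in s, Z ω ∂μ)
    rw [hsplit, div_mul_cancel₀ _ hpos.ne'] at hm
    linarith [le_abs_self (r - ∫ ω, X ω * Z ω ∂μ)]
  have hneg := ae_nonneg_of_forall_setIntegral_nonneg hZ.neg fun s hs _ => by
    simpa only [Pi.neg_apply, integral_neg, neg_nonneg] using hset s hs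
  filter_upwards [hneg] with ω hω
  simpa using hω

end IntegralBounds

namespace Orlicz

variable {Ω : Type*} [MeasurableSpace Ω] {μ : Measure Ω} {Φ : OrliczFunction}
  {ρ : (Ω → ℝ) → EReal}

lemma pairing_neg_left (X Y : Ω → ℝ) : pairing μ (-X) Y = -pairing μ X Y := by
  simp only [pairing, Pi.neg_apply, neg_mul, integral_neg]

lemma pairing_neg_right (X Y : Ω → ℝ) : pairing μ X (-Y) = -pairing μ X Y := by
  simp only [pairing, Pi.neg_apply, mul_neg, integral_neg]

lemma pairing_smul_left (l : ℝ) (X Y : Ω → ℝ) : pairing μ (l • X) Y = l * pairing μ X Y := by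
  simp only [pairing, Pi.smul_apply, smul_eq_mul, mul_assoc, integral_const_mul]

lemma pairing_sub_le_rhoStar {X : Ω → ℝ} (hX : MemLp Φ μ X) (Y : Ω → ℝ) :
    ((pairing μ X Y : ℝ) : EReal) - ρ X ≤ rhoStar Φ μ ρ Y :=
  le_sSup ⟨X, hX, rfl⟩

lemma pairing_le_of_rhoStar_eq_zero {Y : Ω → ℝ} (hY : rhoStar Φ μ ρ Y = 0) {X : Ω → ℝ}
    (hX : MemLp Φ μ X) : ((pairing μ X Y : ℝ) : EReal) ≤ ρ X :=
  EReal.sub_nonpos.mp (hY ▸ pairing_sub_le_rhoStar hX Y)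

lemma mul_pairing_sub_le_rhoStar
    (hhom : ∀ (X : Ω → ℝ) (l : ℝ), 0 < l → MemLp Φ μ X → ρ (l • X) = ((l : ℝ) : EReal) * ρ X)
    {X : Ω → ℝ} (hX : MemLp Φ μ X) {s : ℝ} (hs : ρ X = s) (Y : Ω → ℝ) {l : ℝ} (hl : 0 < l) :
    ((l * (pairing μ X Y - s) : ℝ) : EReal) ≤ rhoStar Φ μ ρ Y := by
  have h := pairing_sub_le_rhoStar (ρ := ρ) (hX.const_smul hl.ne') Y
  rwa [pairing_smul_left, hhom X l hl hX, hs, ← EReal.coe_mul, ← EReal.coe_sub, ← mul_sub] at h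

lemma rhoStar_nonneg
    (hhom : ∀ (X : Ω → ℝ) (l : ℝ), 0 < l → MemLp Φ μ X → ρ (l • X) = ((l : ℝ) : EReal) * ρ X)
    {X : Ω → ℝ} (hX : MemLp Φ μ X) {s : ℝ} (hs : ρ X = s) (Y : Ω → ℝ) :
    0 ≤ rhoStar Φ μ ρ Y := by
  have hreal : Tendsto (fun l : ℝ => l * (pairing μ X Y - s)) (𝓝[>] 0) (𝓝 0) := by
    have h := (continuous_mul_const (pairing μ X Y - s)).tendsto 0
    rw [zero_mul] at h
    exact tendsto_nhdsWithin_of_tendsto_nhds h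
  have hlim := (continuous_coe_real_ereal.tendsto 0).comp hreal
  rw [EReal.coe_zero] at hlim
  exact le_of_tendsto hlim (eventually_nhdsWithin_of_forall fun l hl =>
    mul_pairing_sub_le_rhoStar hhom hX hs Y hl)

lemma rhoStar_eq_top_of_pos (hbot : ∀ X, ρ X ≠ ⊥)
    (hhom : ∀ (X : Ω → ℝ) (l : ℝ), 0 < l → MemLp Φ μ X → ρ (l • X) = ((l : ℝ) : EReal) * ρ X)
    {Y : Ω → ℝ} (hY : 0 < rhoStar Φ μ ρ Y) : rhoStar Φ μ ρ Y = ⊤ := by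
  obtain ⟨_, ⟨X, hX, rfl⟩, hpos⟩ := lt_sSup_iff.mp hY
  have htop : ρ X ≠ ⊤ := fun h => by simp [h] at hpos
  have hs : ρ X = ((ρ X).toReal : EReal) := (EReal.coe_toReal htop (hbot X)).symm
  have hc : 0 < pairing μ X Y - (ρ X).toReal := by
    rw [hs, ← EReal.coe_sub] at hpos
    exact_mod_cast hpos
  refine (EReal.eq_top_iff_forall_lt _).mpr fun y => ?_
  calc (y : EReal) < ((|y| + 1 : ℝ) : EReal) := by
        exact_mod_cast (by linarith [le_abs_self y] : y < |y| + 1)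
    _ = (((|y| + 1) / (pairing μ X Y - (ρ X).toReal) * (pairing μ X Y - (ρ X).toReal) : ℝ)
          : EReal) := by rw [div_mul_cancel₀ _ hc.ne']
    _ ≤ rhoStar Φ μ ρ Y := mul_pairing_sub_le_rhoStar hhom hX hs Y (by positivity)

lemma Coherent.exists_eq_coe (hρ : Coherent Φ μ ρ) :
    ∃ (X₀ : Ω → ℝ) (r : ℝ), MemLp Φ μ X₀ ∧ ρ X₀ = r := by
  obtain ⟨hbot, ⟨X₀, hX₀, htop⟩, -⟩ := hρ
  exact ⟨X₀, (ρ X₀).toReal, hX₀, (EReal.coe_toReal htop (hbot X₀)).symm⟩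

lemma Coherent.rhoStar_eq_zero_or_top (hρ : Coherent Φ μ ρ) (Y : Ω → ℝ) :
    rhoStar Φ μ ρ Y = 0 ∨ rhoStar Φ μ ρ Y = ⊤ := by
  obtain ⟨X₀, r, hX₀, hr⟩ := hρ.exists_eq_coe
  obtain ⟨hbot, -, -, -, -, hhom⟩ := hρ
  exact (rhoStar_nonneg hhom hX₀ hr Y).eq_or_lt.imp Eq.symm (rhoStar_eq_top_of_pos hbot hhom)

lemma Coherent.integral_eq_one_and_ae_nonneg [IsProbabilityMeasure μ] (hρ : Coherent Φ μ ρ)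
    {Y : Ω → ℝ} (hY : rhoStar Φ μ ρ (-Y) = 0) :
    ∫ ω, Y ω ∂μ = 1 ∧ ∀ᵐ ω ∂μ, 0 ≤ Y ω := by
  obtain ⟨X₀, r, hX₀, hr⟩ := hρ.exists_eq_coe
  obtain ⟨-, -, -, hmono, hcash, -⟩ := hρ
  have hdom : ∀ X, MemLp Φ μ X → ∀ t : ℝ, ρ X ≤ t → ∫ ω, X ω * -Y ω ∂μ ≤ t :=
    fun X hX t hXt => EReal.coe_le_coe_iff.mp ((pairing_le_of_rhoStar_eq_zero hY hX).trans hXt)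
  have hcashY : ∀ m : ℝ, ∫ ω, (X₀ ω + m) * -Y ω ∂μ ≤ r - m := fun m =>
    hdom (fun ω => X₀ ω + m) (hX₀.add_of_abs_le aestronglyMeasurable_const fun _ => le_rfl) _
      (by rw [hcash X₀ m hX₀, hr, EReal.coe_sub])
  obtain ⟨hYint, hXYint⟩ := integrable_of_forall_integral_add_const_mul_le hcashY
  have hmean := integral_eq_neg_one_of_forall_integral_add_const_mul_le hcashY
  rw [integral_neg] at hmean
  refine ⟨by linarith, ?_⟩
  have hnonpos := ae_nonpos_of_forall_integral_add_indicator_mul_le hYint hXYint (r := r)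
    fun s hs m hm => by
      have hW : ∀ ω, 0 ≤ s.indicator (fun _ => m) ω := fun ω =>
        Set.indicator_nonneg (fun _ _ => hm.le) ω
      have hX : MemLp Φ μ (X₀ + s.indicator fun _ => m) :=
        hX₀.add_of_abs_le (aestronglyMeasurable_const.indicator hs) (C := m) fun ω => by
          rw [abs_of_nonneg (hW ω)]
          exact Set.indicator_le_self' (fun _ _ => hm.le) ω
      exact hdom _ hX r (hr ▸ hmono _ _ hX hX₀ (Eventually.of_forall fun ω =>
        le_add_of_nonneg_right (hW ω)))
  filter_upwards [hnonpos] with ω hω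
  linarith

lemma Coherent.sSup_pairing_sub_rhoStar_eq (hρ : Coherent Φ μ ρ) (Ψ : OrliczFunction)
    (X : Ω → ℝ) :
    sSup {v : EReal | ∃ Y : Ω → ℝ, MemLp Ψ μ Y ∧
        v = ((pairing μ X Y : ℝ) : EReal) - rhoStar Φ μ ρ Y} =
      sSup {v : EReal | ∃ Y : Ω → ℝ, (MemLp Ψ μ Y ∧ rhoStar Φ μ ρ (-Y) = 0) ∧
        v = ((pairing μ (-X) Y : ℝ) : EReal)} := by
  apply le_antisymm
  · refine sSup_le ?_
    rintro _ ⟨Y, hY, rfl⟩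
    rcases hρ.rhoStar_eq_zero_or_top Y with h | h
    · exact le_sSup ⟨-Y, ⟨hY.neg, by rwa [neg_neg]⟩,
        by rw [h, sub_zero, pairing_neg_left, pairing_neg_right, neg_neg]⟩
    · simp [h]
  · refine sSup_le ?_
    rintro _ ⟨Y, ⟨hY, hQ⟩, rfl⟩
    exact le_sSup ⟨-Y, hY.neg, by rw [hQ, sub_zero, pairing_neg_left, pairing_neg_right]⟩

end Orlicz

theorem dual_representation_scenarios_general {Ω : Type*} [MeasurableSpace Ω]
    (μ : Measure Ω) [IsProbabilityMeasure μ] (Φ Ψ : OrliczFunction)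
    (ρ : (Ω → ℝ) → EReal) (hcoh : Coherent Φ μ ρ)
    (hFM : ∀ X, MemLp Φ μ X →
      ρ X = sSup {v : EReal | ∃ Y : Ω → ℝ, MemLp Ψ μ Y ∧
        v = ((pairing μ X Y : ℝ) : EReal) - rhoStar Φ μ ρ Y}) :
    (∀ Y ∈ {Y : Ω → ℝ | MemLp Ψ μ Y ∧ rhoStar Φ μ ρ (-Y) = 0},
        (∫ ω, Y ω ∂μ) = 1 ∧ (∀ᵐ ω ∂μ, 0 ≤ Y ω)) ∧
      (∀ X, MemLp Φ μ X →
        ρ X = sSup {v : EReal | ∃ Y : Ω → ℝ,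
          (MemLp Ψ μ Y ∧ rhoStar Φ μ ρ (-Y) = 0) ∧
          v = ((pairing μ (-X) Y : ℝ) : EReal)}) :=
  ⟨fun _ hY => hcoh.integral_eq_one_and_ae_nonneg hY.2,
    fun X hX => (hFM X hX).trans (hcoh.sSup_pairing_sub_rhoStar_eq Ψ X)⟩

/-- For a coherent risk measure satisfying the Fenchel–Moreau representation, the set
`𝒬 = {Y ∈ L^Ψ : ρ*(−Y) = 0}` consists of nonnegative random variables of expectation 1
and yields the dual representation `ρ(X) = sup_{Y∈𝒬} E[−XY]`. -/
theorem dual_representation_scenarios {Ω : Type*} [MeasurableSpace Ω]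
    (μ : Measure Ω) [IsProbabilityMeasure μ] (Φ Ψ : OrliczFunction)
    (hconj : IsConjugate Φ Ψ)
    (ρ : (Ω → ℝ) → EReal) (hcoh : Coherent Φ μ ρ)
    (hFM : ∀ X, MemLp Φ μ X →
      ρ X = sSup {v : EReal | ∃ Y : Ω → ℝ, MemLp Ψ μ Y ∧
        v = ((pairing μ X Y : ℝ) : EReal) - rhoStar Φ μ ρ Y}) :
    (∀ Y ∈ {Y : Ω → ℝ | MemLp Ψ μ Y ∧ rhoStar Φ μ ρ (-Y) = 0},
        (∫ ω, Y ω ∂μ) = 1 ∧ (∀ᵐ ω ∂μ, 0 ≤ Y ω)) ∧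
      (∀ X, MemLp Φ μ X →
        ρ X = sSup {v : EReal | ∃ Y : Ω → ℝ,
          (MemLp Ψ μ Y ∧ rhoStar Φ μ ρ (-Y) = 0) ∧
          v = ((pairing μ (-X) Y : ℝ) : EReal)}) :=
  dual_representation_scenarios_general μ Φ Ψ ρ hcoh hFM
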